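/- arXiv:2406.16420 — 2 statements merged into one kernel-verified Lean document; each statement's English description precedes it below -/
import Mathlib

section
/- ($q$-multinomial normalization) For every $0<q<1$, every $k\ge 1$, every $\theta_1,\ldots,\theta_k>0$ and every $n\in\mathbb{N}$, the $q$-multinomial probability function of the first kind $f^B_{\mathcal X}(x_1,\ldots,x_k)=\binom{n}{x_1,\ldots,x_k}_q \prod_{j=1}^{k} \frac{\theta_j^{x_j} q^{\binom{x_j}{2}}}{\prod_{i=1}^{n-s_{j-1}}(1+\theta_j q^{i-1})}$, where $s_0=0$ and $s_j=\sum_{i=1}^{j}x_i$, sums to $1$ over all $(x_1,\ldots,x_k)\in\mathbb{N}^k$ with $\sum_{j=1}^k x_j\le n$. -/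
/-!
Given `x₁ = a`, the remaining coordinates follow the same law for `n - a` trials and the
classes `2, …, k`, because `[n choose x]_q = [n choose a]_q [n - a choose x₂, …, x_k]_q` and the
`j`-th denominator only sees `n - s_{j-1}`. Summing them out first leaves
`∑ₐ [n choose a]_q θ₁^a q^{C(a,2)} / ∏_{i<n} (1 + θ₁ q^i)`, which is `1` by Cauchy's
`q`-binomial theorem `∑ₐ [n choose a]_q θ^a q^{C(a,2)} = ∏_{i<n} (1 + θ q^i)`. That in turn
follows by induction on `n` from the `q`-Pascal rule
`[n+1 choose a+1]_q = [n choose a+1]_q + q^{n-a} [n choose a]_q`,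
which is `[n+1]_q = [n-a]_q + q^{n-a} [a+1]_q`.
-/

open scoped BigOperators

/-- The `q`-factorial `[n]_q! = ∏_{k=1}^n (1-q^k)/(1-q)`. -/
noncomputable def qFact (q : ℝ) (n : ℕ) : ℝ :=
  ∏ k ∈ Finset.range n, (1 - q ^ (k + 1)) / (1 - q)

/-- The `q`-multinomial coefficient
`(n choose x₁,…,x_k)_q = [n]_q!/([x₁]_q! ⋯ [x_k]_q! [n-s_k]_q!)`. -/
noncomputable def qMultinomCoeff (q : ℝ) (n : ℕ) {k : ℕ} (x : Fin k → ℕ) : ℝ :=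
  qFact q n / ((∏ j, qFact q (x j)) * qFact q (n - ∑ j, x j))

/-- The `q`-multinomial probability function of the first kind
`f(x₁,…,x_k) = (n choose x₁,…,x_k)_q ∏_j θ_j^{x_j} q^{C(x_j,2)} / ∏_{i=1}^{n-s_{j-1}} (1+θ_j q^{i-1})`,
where `s_{j-1} = x₁ + ⋯ + x_{j-1}`. -/
noncomputable def qMultinomPF (q : ℝ) (n : ℕ) {k : ℕ} (θ : Fin k → ℝ) (x : Fin k → ℕ) : ℝ :=
  qMultinomCoeff q n x *
    ∏ j, (θ j ^ x j * q ^ (x j * (x j - 1) / 2) /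
      ∏ i ∈ Finset.range (n - ∑ i ∈ Finset.univ.filter (· < j), x i), (1 + θ j * q ^ i))

open Finset

noncomputable def qNum (q : ℝ) (m : ℕ) : ℝ := (1 - q ^ m) / (1 - q)

theorem qNum_add (q : ℝ) (m l : ℕ) : qNum q (m + l) = qNum q m + q ^ m * qNum q l := by
  rw [qNum, qNum, qNum, mul_div_assoc', ← add_div]
  ring_nf

@[simp]
theorem qFact_zero (q : ℝ) : qFact q 0 = 1 := prod_range_zero _

theorem qFact_succ (q : ℝ) (n : ℕ) : qFact q (n + 1) = qFact q n * qNum q (n + 1) :=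
  prod_range_succ _ _

theorem qFact_pos {q : ℝ} (hq0 : 0 < q) (hq1 : q < 1) (n : ℕ) : 0 < qFact q n :=
  prod_pos fun k _ =>
    div_pos (by linarith [pow_lt_one₀ hq0.le hq1 (by omega : k + 1 ≠ 0)]) (by linarith)

/-- The Gaussian binomial coefficient, extended by `0` beyond `n` as `Nat.choose` is. -/
noncomputable def qBinom (q : ℝ) (n a : ℕ) : ℝ :=
  if a ≤ n then qFact q n / (qFact q a * qFact q (n - a)) else 0

section GaussianBinomial

variable {q : ℝ}

theorem qBinom_zero_right (hq : ∀ m, qFact q m ≠ 0) (n : ℕ) : qBinom q n 0 = 1 := by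
  simp [qBinom, hq n]

theorem qBinom_self (hq : ∀ m, qFact q m ≠ 0) (n : ℕ) : qBinom q n n = 1 := by
  simp [qBinom, hq n]

theorem qBinom_of_lt {n a : ℕ} (h : n < a) : qBinom q n a = 0 := if_neg h.not_ge

theorem qBinom_succ_succ (hq : ∀ m, qFact q m ≠ 0) (n a : ℕ) :
    qBinom q (n + 1) (a + 1) = qBinom q n (a + 1) + q ^ (n - a) * qBinom q n a := by
  rcases lt_trichotomy (a + 1) (n + 1) with h | h | h
  · obtain ⟨b, rfl⟩ : ∃ b, n = a + 1 + b := ⟨n - (a + 1), by omega⟩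
    have hnum : qNum q (a + 1 + b + 1) = qNum q (b + 1) + q ^ (b + 1) * qNum q (a + 1) := by
      rw [show a + 1 + b + 1 = b + 1 + (a + 1) by ring, qNum_add]
    obtain ⟨ha, ha'⟩ := mul_ne_zero_iff.mp (qFact_succ q a ▸ hq (a + 1))
    obtain ⟨hb, hb'⟩ := mul_ne_zero_iff.mp (qFact_succ q b ▸ hq (b + 1))
    simp only [qBinom, show a + 1 + b + 1 - (a + 1) = b + 1 by omega,
      show a + 1 + b - (a + 1) = b by omega, show a + 1 + b - a = b + 1 by omega,
      if_pos (by omega : a + 1 ≤ a + 1 + b + 1), if_pos (by omega : a + 1 ≤ a + 1 + b),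
      if_pos (by omega : a ≤ a + 1 + b), qFact_succ _ (a + 1 + b), hnum, qFact_succ _ a,
      qFact_succ _ b]
    field_simp
  · obtain rfl : a = n := by omega
    simp [qBinom_self hq, qBinom_of_lt]
  · rw [qBinom_of_lt h, qBinom_of_lt (by omega : n < a + 1), qBinom_of_lt (by omega : n < a)]
    ring

theorem sum_qBinom_mul_eq_prod (hq : ∀ m, qFact q m ≠ 0) (θ : ℝ) (n : ℕ) :
    ∑ a ∈ range (n + 1), qBinom q n a * (θ ^ a * q ^ a.choose 2) =
      ∏ i ∈ range n, (1 + θ * q ^ i) := by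
  induction n with
  | zero => simp [qBinom_zero_right hq]
  | succ n ih =>
    set w : ℕ → ℝ := fun a => θ ^ a * q ^ a.choose 2
    -- `w (a + 1) = θ q^a w a`, so the second Pascal term contributes `θ q^n` times the old sum.
    have hshift : ∀ a ∈ range (n + 1), q ^ (n - a) * qBinom q n a * w (a + 1) =
        θ * q ^ n * (qBinom q n a * w a) := by
      intro a ha
      have hna : n - a + a = n := Nat.sub_add_cancel (Nat.lt_succ_iff.mp (mem_range.mp ha))
      simp only [w, Nat.choose_succ_succ', Nat.choose_one_right, pow_add, pow_succ]
      rw [show q ^ n = q ^ (n - a) * q ^ a by rw [← pow_add, hna]]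
      ring
    calc ∑ a ∈ range (n + 1 + 1), qBinom q (n + 1) a * w a
        = ∑ a ∈ range (n + 1), qBinom q n (a + 1) * w (a + 1) + qBinom q n 0 * w 0 +
            ∑ a ∈ range (n + 1), q ^ (n - a) * qBinom q n a * w (a + 1) := by
          simp only [sum_range_succ' _ (n + 1), qBinom_succ_succ hq, qBinom_zero_right hq,
            add_mul, sum_add_distrib]
          ring
      _ = (∑ a ∈ range (n + 1), qBinom q n a * w a) * (1 + θ * q ^ n) := by
          rw [← sum_range_succ' (fun a => qBinom q n a * w a), sum_range_succ,
            qBinom_of_lt (Nat.lt_succ_self n), sum_congr rfl hshift, ← mul_sum]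
          ring
      _ = ∏ i ∈ range (n + 1), (1 + θ * q ^ i) := by rw [ih, prod_range_succ]

end GaussianBinomial

theorem qMultinomCoeff_cons {q : ℝ} {n a k : ℕ} (hq : qFact q (n - a) ≠ 0) (ha : a ≤ n)
    (y : Fin k → ℕ) :
    qMultinomCoeff q n (Fin.cons a y : Fin (k + 1) → ℕ) =
      qBinom q n a * qMultinomCoeff q (n - a) y := by
  simp only [qMultinomCoeff, qBinom, if_pos ha, Fin.sum_cons, Fin.prod_univ_succ, Fin.cons_zero,
    Fin.cons_succ, Nat.sub_sub]
  field_simp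

theorem Fin.sum_filter_lt_succ {M : Type*} [AddCommMonoid M] {k : ℕ} (f : Fin (k + 1) → M)
    (j : Fin k) :
    ∑ i ∈ univ.filter (· < j.succ), f i = f 0 + ∑ i ∈ univ.filter (· < j), f i.succ := by
  simp [sum_filter, Fin.sum_univ_succ, Fin.succ_lt_succ_iff, Fin.succ_pos]

theorem qMultinomPF_cons {q : ℝ} {n a k : ℕ} (hq : qFact q (n - a) ≠ 0) (ha : a ≤ n)
    (θ : Fin (k + 1) → ℝ) (y : Fin k → ℕ) :
    qMultinomPF q n θ (Fin.cons a y) =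
      qBinom q n a * (θ 0 ^ a * q ^ a.choose 2) / (∏ i ∈ range n, (1 + θ 0 * q ^ i)) *
        qMultinomPF q (n - a) (Fin.tail θ) y := by
  simp only [qMultinomPF, qMultinomCoeff_cons hq ha, Fin.prod_univ_succ, Fin.sum_filter_lt_succ,
    Fin.cons_zero, Fin.cons_succ, Fin.tail, Nat.sub_sub, Nat.choose_two_right, not_lt_zero,
    filter_false, sum_empty, Nat.sub_zero]
  ring

def tuplesSumLe (k n : ℕ) : Finset (Fin k → ℕ) :=
  (Fintype.piFinset fun _ : Fin k => range (n + 1)).filter (fun x => ∑ j, x j ≤ n)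

@[simp]
theorem mem_tuplesSumLe {k n : ℕ} {x : Fin k → ℕ} : x ∈ tuplesSumLe k n ↔ ∑ j, x j ≤ n := by
  simp only [tuplesSumLe, mem_filter, Fintype.mem_piFinset, mem_range, and_iff_right_iff_imp]
  exact fun h j => Nat.lt_succ_of_le ((single_le_sum (fun i _ => Nat.zero_le (x i))
    (mem_univ j)).trans h)

theorem tuplesSumLe_zero (n : ℕ) : tuplesSumLe 0 n = {Fin.elim0} := by
  ext x
  simp [Subsingleton.elim x Fin.elim0]

theorem sum_tuplesSumLe_succ {M : Type*} [AddCommMonoid M] (k n : ℕ)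
    (f : (Fin (k + 1) → ℕ) → M) :
    ∑ x ∈ tuplesSumLe (k + 1) n, f x =
      ∑ a ∈ range (n + 1), ∑ y ∈ tuplesSumLe k (n - a), f (Fin.cons a y) := by
  rw [sum_sigma']
  refine sum_nbij' (fun x => ⟨x 0, Fin.tail x⟩) (fun p => Fin.cons p.1 p.2) ?_ ?_ ?_ ?_ ?_
  · intro x hx
    simp only [mem_tuplesSumLe, Fin.sum_univ_succ, mem_sigma, mem_range] at hx ⊢
    exact ⟨by omega, by simp only [Fin.tail]; omega⟩
  · rintro ⟨a, y⟩ hp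
    simp only [mem_tuplesSumLe, Fin.sum_cons, mem_sigma, mem_range] at hp ⊢
    omega
  · intro x _
    exact Fin.cons_self_tail x
  · rintro ⟨a, y⟩ _
    simp
  · intro x _
    rw [Fin.cons_self_tail]

theorem sum_qMultinomPF_eq_one {q : ℝ} (hq : ∀ m, qFact q m ≠ 0) {k : ℕ} (θ : Fin k → ℝ)
    (hθ : ∀ j i, 1 + θ j * q ^ i ≠ 0) (n : ℕ) :
    ∑ x ∈ tuplesSumLe k n, qMultinomPF q n θ x = 1 := by
  induction k generalizing n with
  | zero => simp [tuplesSumLe_zero, qMultinomPF, qMultinomCoeff, hq n]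
  | succ k ih =>
    have hP : ∏ i ∈ range n, (1 + θ 0 * q ^ i) ≠ 0 := prod_ne_zero_iff.mpr fun i _ => hθ 0 i
    calc ∑ x ∈ tuplesSumLe (k + 1) n, qMultinomPF q n θ x
        = ∑ a ∈ range (n + 1),
            qBinom q n a * (θ 0 ^ a * q ^ a.choose 2) / ∏ i ∈ range n, (1 + θ 0 * q ^ i) := by
          rw [sum_tuplesSumLe_succ]
          refine sum_congr rfl fun a ha => ?_
          have ha : a ≤ n := Nat.lt_succ_iff.mp (mem_range.mp ha)
          simp only [qMultinomPF_cons (hq (n - a)) ha, ← mul_sum,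
            ih (Fin.tail θ) (fun j => hθ j.succ), mul_one]
      _ = 1 := by rw [← sum_div, sum_qBinom_mul_eq_prod hq, div_self hP]

theorem qMultinomial_normalization_general (q : ℝ) (hq0 : 0 < q) (hq1 : q < 1)
    (k : ℕ) (θ : Fin k → ℝ) (hθ : ∀ j, 0 < θ j) (n : ℕ) :
    ∑ x ∈ (Fintype.piFinset fun _ : Fin k => Finset.range (n + 1)).filter
        (fun x => ∑ j, x j ≤ n),
      qMultinomPF q n θ x = 1 :=
  sum_qMultinomPF_eq_one (fun m => (qFact_pos hq0 hq1 m).ne') θ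
    (fun j i => (add_pos one_pos (mul_pos (hθ j) (pow_pos hq0 i))).ne') n

/-- **q-multinomial normalization**: the `q`-multinomial probability function of the first
kind sums to `1` over all `(x₁,…,x_k) ∈ ℕ^k` with `x₁ + ⋯ + x_k ≤ n`. -/
theorem qMultinomial_normalization (q : ℝ) (hq0 : 0 < q) (hq1 : q < 1)
    (k : ℕ) (hk : 1 ≤ k) (θ : Fin k → ℝ) (hθ : ∀ j, 0 < θ j) (n : ℕ) :
    ∑ x ∈ (Fintype.piFinset fun _ : Fin k => Finset.range (n + 1)).filter
        (fun x => ∑ j, x j ≤ n),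
      qMultinomPF q n θ x = 1 :=
  qMultinomial_normalization_general q hq0 hq1 k θ hθ n
end

section
/- (Discrete limit: $q$-multinomial to multiple Heine) Fix $0<q<1$, $k\ge 1$, $\lambda_1,\ldots,\lambda_k>0$, and set $\theta_j=\lambda_j(1-q)$ for $j=1,\ldots,k$. Then for every fixed $(x_1,\ldots,x_k)\in\mathbb{N}^k$, $\lim_{n\to\infty} \binom{n}{x_1,\ldots,x_k}_q \prod_{j=1}^{k} \frac{\theta_j^{x_j} q^{\binom{x_j}{2}}}{\prod_{i=1}^{n-s_{j-1}}(1+\theta_j q^{i-1})} = \prod_{j=1}^{k} \frac{q^{\binom{x_j}{2}} \lambda_j^{x_j}}{[x_j]_q!}\prod_{i=1}^{\infty}\left(1+\lambda_j(1-q)q^{i-1}\right)^{-1}$, where $s_0=0$ and $s_j=\sum_{i=1}^{j}x_i$. -/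
/-!
As `n → ∞` the `q`-multinomial coefficient behaves like `[n]_q! / [n - s]_q!`, a product of
`s` factors `(1 - q^m)/(1 - q)` with `m → ∞`, so it tends to `(1 - q)^{-s} / ∏ [x_j]_q!`.
The `j`-th denominator is a partial product of `∏ (1 + θ_j q^i)`, over a range of length
`n - s_{j-1} → ∞`, so it tends to the (nonzero) infinite product. Substituting
`θ_j = λ_j (1 - q)` distributes `(1 - q)^{-s}` among the factors `θ_j^{x_j}`.
-/

open scoped BigOperators

open Filter Finset Topology

section

variable {q : ℝ}

lemma qFact_ne_zero (hq : |q| < 1) (n : ℕ) : qFact q n ≠ 0 := by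
  have hq1 : 1 - q ≠ 0 := by linarith [le_abs_self q]
  refine prod_ne_zero_iff.2 fun m _ => div_ne_zero ?_ hq1
  have : |q ^ (m + 1)| < 1 := by
    rw [abs_pow]; exact pow_lt_one₀ (abs_nonneg q) hq m.succ_ne_zero
  linarith [le_abs_self (q ^ (m + 1))]

lemma qFact_add (q : ℝ) (m s : ℕ) :
    qFact q (m + s) = qFact q m * ∏ i ∈ range s, (1 - q ^ (m + i + 1)) / (1 - q) := by
  simp only [qFact, prod_range_add, add_assoc]

lemma tendsto_qFact_add_div_qFact (hq : |q| < 1) (s : ℕ) :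
    Tendsto (fun m => qFact q (m + s) / qFact q m) atTop (𝓝 ((1 - q)⁻¹ ^ s)) := by
  have hfactor (i : ℕ) :
      Tendsto (fun m => (1 - q ^ (m + i + 1)) / (1 - q)) atTop (𝓝 (1 - q)⁻¹) := by
    have hpow : Tendsto (fun m => q ^ (m + i + 1)) atTop (𝓝 0) :=
      (tendsto_pow_atTop_nhds_zero_of_abs_lt_one hq).comp (tendsto_add_atTop_nat (i + 1))
    simpa using ((tendsto_const_nhds (x := (1 : ℝ))).sub hpow).div_const (1 - q)
  have hprod := tendsto_finsetProd (range s) fun i _ => hfactor i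
  rw [prod_const, card_range] at hprod
  refine hprod.congr fun m => ?_
  rw [qFact_add, mul_div_cancel_left₀ _ (qFact_ne_zero hq m)]

lemma tendsto_qMultinomCoeff (hq : |q| < 1) {k : ℕ} (x : Fin k → ℕ) :
    Tendsto (fun n => qMultinomCoeff q n x) atTop
      (𝓝 ((1 - q)⁻¹ ^ (∑ j, x j) / ∏ j, qFact q (x j))) := by
  rw [← tendsto_add_atTop_iff_nat (∑ j, x j)]
  refine ((tendsto_qFact_add_div_qFact hq _).div_const _).congr fun m => ?_
  rw [qMultinomCoeff, Nat.add_sub_cancel, div_div, mul_comm]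

lemma summable_norm_mul_pow (hq : |q| < 1) (c : ℝ) : Summable fun i : ℕ => ‖c * q ^ i‖ := by
  simpa [norm_mul, norm_pow] using
    (summable_geometric_of_lt_one (abs_nonneg q) hq).mul_left |c|

lemma tendsto_prod_range_sub_one_add_mul_pow (hq : |q| < 1) (c : ℝ) (t : ℕ) :
    Tendsto (fun n => ∏ i ∈ range (n - t), (1 + c * q ^ i)) atTop
      (𝓝 (∏' i, (1 + c * q ^ i))) :=
  (multipliable_one_add_of_summable (summable_norm_mul_pow hq c)).hasProd.tendsto_prod_nat.comp
    (tendsto_sub_atTop_nat t)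

lemma tprod_one_add_mul_pow_ne_zero (hq : |q| < 1) {c : ℝ} (hc : ∀ i, 1 + c * q ^ i ≠ 0) :
    ∏' i, (1 + c * q ^ i) ≠ 0 :=
  tprod_one_add_ne_zero_of_summable hc (summable_norm_mul_pow hq c)

end

theorem qMultinomial_tendsto_multipleHeine_general (q : ℝ) (hq0 : 0 < q) (hq1 : q < 1)
    (k : ℕ) (lam : Fin k → ℝ) (hlam : ∀ j, 0 < lam j)
    (θ : Fin k → ℝ) (hθ : ∀ j, θ j = lam j * (1 - q)) (x : Fin k → ℕ) :
    Filter.Tendsto (fun n : ℕ => qMultinomPF q n θ x) Filter.atTop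
      (nhds (∏ j, (q ^ (x j * (x j - 1) / 2) * lam j ^ x j / qFact q (x j)) *
        (∏' i : ℕ, (1 + lam j * (1 - q) * q ^ i))⁻¹)) := by
  have hq : |q| < 1 := abs_lt.2 ⟨by linarith, hq1⟩
  have h1q : 0 < 1 - q := by linarith
  obtain rfl : θ = fun j => lam j * (1 - q) := funext hθ
  have hP (j : Fin k) : ∏' i, (1 + lam j * (1 - q) * q ^ i) ≠ 0 :=
    tprod_one_add_mul_pow_ne_zero hq fun i => by
      have := hlam j; positivity
  have hweights := tendsto_finsetProd univ fun j _ =>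
    (tendsto_const_nhds (x := (lam j * (1 - q)) ^ x j * q ^ (x j * (x j - 1) / 2))).div
      (tendsto_prod_range_sub_one_add_mul_pow hq _ (∑ i ∈ univ.filter (· < j), x i)) (hP j)
  convert (tendsto_qMultinomCoeff hq x).mul hweights using 2
  · rfl
  rw [← prod_pow_eq_pow_sum, ← prod_div_distrib, ← prod_mul_distrib]
  refine prod_congr rfl fun j _ => ?_
  have hfact := qFact_ne_zero hq (x j)
  have hpow := pow_ne_zero (x j) h1q.ne'
  rw [mul_pow, inv_pow]
  field_simp

/-- **Discrete limit: q-multinomial to multiple Heine.** With `θ_j = λ_j (1-q)` fixed,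
for every fixed `(x₁,…,x_k)` the q-multinomial p.f. tends, as `n → ∞`, to the
multiple Heine p.f. `∏_j q^{C(x_j,2)} λ_j^{x_j} / [x_j]_q! ∏_{i=1}^∞ (1+λ_j(1-q)q^{i-1})⁻¹`. -/
theorem qMultinomial_tendsto_multipleHeine (q : ℝ) (hq0 : 0 < q) (hq1 : q < 1)
    (k : ℕ) (hk : 1 ≤ k) (lam : Fin k → ℝ) (hlam : ∀ j, 0 < lam j)
    (θ : Fin k → ℝ) (hθ : ∀ j, θ j = lam j * (1 - q)) (x : Fin k → ℕ) :
    Filter.Tendsto (fun n : ℕ => qMultinomPF q n θ x) Filter.atTop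
      (nhds (∏ j, (q ^ (x j * (x j - 1) / 2) * lam j ^ x j / qFact q (x j)) *
        (∏' i : ℕ, (1 + lam j * (1 - q) * q ^ i))⁻¹)) :=
  qMultinomial_tendsto_multipleHeine_general q hq0 hq1 k lam hlam θ hθ x
end
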